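/- arXiv:1409.8428 — 7 statements merged into one kernel-verified Lean document; each statement's English description precedes it below -/
import Mathlib

section
/- Let G = (V,D) be a directed graph on vertex set V = {1,...,K}, and let p be any probability distribution on V. Then the sum over all vertices i of p_i / (p_i + Σ_{j : (j,i) ∈ D} p_j) is at most mas(G), the maximum number of vertices of an induced acyclic subgraph of G. -/
/-!
Greedy argument. Write `P_i = p_i + ∑_{j → i} p_j` for the weight of the closed
in-neighbourhood of `i`, and pick the vertex `x` with the least `P_x`. Every vertex `j` of that
neighbourhood has `P_j ≥ P_x`, so the neighbourhood contributes at most `∑ p_j / P_x = 1` to the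
sum. Deleting it only lowers the weights `P_i` of the remaining vertices, and `x` has no
in-neighbour among them, so `x` can be added to an acyclic set of the remaining graph as a source.
-/

open scoped BigOperators

/-- A sequence of at least one arc inside `S` never returns to its starting
vertex: the subgraph induced by `S` has no directed cycles. -/
def AcyclicOn {V : Type*} (D : V → V → Prop) (S : Finset V) : Prop :=
  ∀ (n : ℕ) (f : Fin (n + 2) → V), (∀ k, f k ∈ S) →
    (∀ k : Fin (n + 1), D (f k.castSucc) (f k.succ)) → f 0 ≠ f (Fin.last (n + 1))

/-- `mas D` : the maximum number of vertices of an induced acyclic subgraph. -/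
noncomputable def mas {V : Type*} [Fintype V] (D : V → V → Prop) : ℕ :=
  sSup {n | ∃ S : Finset V, S.card = n ∧ AcyclicOn D S}

open Finset

variable {V : Type*} (D : V → V → Prop)

theorem AcyclicOn.empty : AcyclicOn D ∅ := fun _ _ hmem _ => absurd (hmem 0) (notMem_empty _)

theorem AcyclicOn.insert_of_source [DecidableEq V] {A : Finset V} (hA : AcyclicOn D A)
    {x : V} (hxx : ¬ D x x) (hsrc : ∀ y ∈ A, ¬ D y x) : AcyclicOn D (insert x A) := by
  intro n f hmem harc
  have hsucc : ∀ k : Fin (n + 1), f k.succ ∈ A := by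
    intro k
    refine (mem_insert.1 (hmem k.succ)).resolve_left fun hx => ?_
    rcases mem_insert.1 (hmem k.castSucc) with h | h
    · exact hxx (by simpa [h, hx] using harc k)
    · exact hsrc _ h (by simpa [hx] using harc k)
  intro hcycle
  refine hA n f (Fin.cases ?_ hsucc) harc hcycle
  rw [hcycle, ← Fin.succ_last]
  exact hsucc _

theorem AcyclicOn.card_le_mas [Fintype V] {A : Finset V} (hA : AcyclicOn D A) :
    A.card ≤ mas D :=
  le_csSup ⟨Fintype.card V, by rintro _ ⟨S, rfl, -⟩; exact S.card_le_univ⟩ ⟨A, rfl, hA⟩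

section InWeight

variable [DecidableRel D] (p : V → ℝ)

noncomputable def inWeight (s : Finset V) (i : V) : ℝ :=
  p i + ∑ j ∈ s with D j i, p j

variable {D p}

theorem inWeight_pos (hpos : ∀ i, 0 < p i) (s : Finset V) (i : V) : 0 < inWeight D p s i :=
  add_pos_of_pos_of_nonneg (hpos i) (sum_nonneg fun j _ => (hpos j).le)

theorem inWeight_mono (hpos : ∀ i, 0 < p i) {s t : Finset V} (hst : s ⊆ t) (i : V) :
    inWeight D p s i ≤ inWeight D p t i :=
  add_le_add_right (sum_le_sum_of_subset_of_nonneg (filter_subset_filter _ hst)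
    fun j _ _ => (hpos j).le) _

theorem sum_closedInNeighborhood_eq_inWeight [DecidableEq V] (hirr : ∀ i, ¬ D i i)
    {s : Finset V} {x : V} (hx : x ∈ s) :
    ∑ j ∈ s with j = x ∨ D j x, p j = inWeight D p s x := by
  have hxN : x ∉ s.filter (D · x) := fun h => hirr x (mem_filter.1 h).2
  rw [filter_or, filter_eq' s x, if_pos hx, ← insert_eq, sum_insert hxN]
  rfl

theorem exists_acyclicOn_sum_div_inWeight_le_card [DecidableEq V] (hirr : ∀ i, ¬ D i i)
    (hpos : ∀ i, 0 < p i) (s : Finset V) :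
    ∃ A ⊆ s, AcyclicOn D A ∧ ∑ i ∈ s, p i / inWeight D p s i ≤ A.card := by
  induction s using Finset.strongInduction with
  | H s ih =>
    rcases s.eq_empty_or_nonempty with rfl | hne
    · exact ⟨∅, subset_rfl, AcyclicOn.empty D, by simp⟩
    obtain ⟨x, hx, hmin⟩ := exists_min_image s (inWeight D p s) hne
    set N := s.filter (fun j => j = x ∨ D j x)
    set t := s.filter (fun j => ¬ (j = x ∨ D j x))
    have hts : t ⊂ s := (filter_ssubset).2 ⟨x, hx, fun h => h (Or.inl rfl)⟩
    obtain ⟨A, hAt, hA, hsumA⟩ := ih t hts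
    have hsrc : ∀ y ∈ A, ¬ D y x := fun y hy h => (mem_filter.1 (hAt hy)).2 (Or.inr h)
    have hxA : x ∉ A := fun h => (mem_filter.1 (hAt h)).2 (Or.inl rfl)
    have hN : ∑ i ∈ N, p i / inWeight D p s i ≤ 1 := calc
      ∑ i ∈ N, p i / inWeight D p s i ≤ ∑ i ∈ N, p i / inWeight D p s x :=
        sum_le_sum fun i hi => div_le_div_of_nonneg_left (hpos i).le
          (inWeight_pos hpos s x) (hmin i (mem_filter.1 hi).1)
      _ = 1 := by
        rw [← sum_div, sum_closedInNeighborhood_eq_inWeight hirr hx,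
          div_self (inWeight_pos hpos s x).ne']
    have ht : ∑ i ∈ t, p i / inWeight D p s i ≤ ∑ i ∈ t, p i / inWeight D p t i :=
      sum_le_sum fun i _ => div_le_div_of_nonneg_left (hpos i).le
        (inWeight_pos hpos t i) (inWeight_mono hpos (filter_subset _ s) i)
    refine ⟨insert x A, insert_subset hx (hAt.trans (filter_subset _ s)),
      hA.insert_of_source D (hirr x) hsrc, ?_⟩
    rw [← sum_filter_add_sum_filter_not s (fun j => j = x ∨ D j x), card_insert_of_notMem hxA,
      Nat.cast_succ]
    linarith

end InWeight

theorem stmt1_general (K : ℕ) (D : Fin K → Fin K → Prop) [DecidableRel D]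
    (hirr : ∀ i, ¬ D i i)
    (p : Fin K → ℝ) (hpos : ∀ i, 0 < p i) :
    ∑ i : Fin K, p i / (p i + ∑ j ∈ Finset.univ.filter (fun j => D j i), p j)
      ≤ (mas D : ℝ) := by
  obtain ⟨A, -, hA, hsum⟩ := exists_acyclicOn_sum_div_inWeight_le_card hirr hpos univ
  exact hsum.trans (by exact_mod_cast hA.card_le_mas D)

/-- For any directed graph `D` (no self-loops) on `{1,…,K}` and any probability
distribution `p`, `∑_i p_i / (p_i + ∑_{j : (j,i) ∈ D} p_j) ≤ mas(G)`. -/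
theorem stmt1 (K : ℕ) (D : Fin K → Fin K → Prop) [DecidableRel D]
    (hirr : ∀ i, ¬ D i i)
    (p : Fin K → ℝ) (hpos : ∀ i, 0 < p i) (hsum : ∑ i, p i = 1) :
    ∑ i : Fin K, p i / (p i + ∑ j ∈ Finset.univ.filter (fun j => D j i), p j)
      ≤ (mas D : ℝ) :=
  stmt1_general K D hirr p hpos
end

section
/- Let G = (V,D) be a directed graph on K vertices with in-degrees d_1^-, ..., d_K^-, and let α = α(G) be the independence number of the underlying undirected graph. Then Σ_{i=1}^K 1/(1 + d_i^-) ≤ 2α · ln(1 + K/α). -/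
open scoped BigOperators

/-- Independence number of (the underlying undirected graph of) a directed graph. -/
noncomputable def indepNum {V : Type*} [Fintype V] (D : V → V → Prop) : ℕ :=
  sSup {n | ∃ S : Finset V, S.card = n ∧
    ∀ i ∈ S, ∀ j ∈ S, i ≠ j → ¬ D i j ∧ ¬ D j i}

/-!
If every in-degree inside a vertex set `S` is at most `m`, the underlying undirected graph on `S`
has average degree at most `2m`, so greedily picking a vertex of degree `≤ 2m` and discarding its
neighbours yields an independent set of size `≥ |S| / (2m + 1)`; hence `|S| ≤ (2m + 1) α`.
Removing a vertex `v` of largest in-degree `d_v` from `S` therefore costs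
`1 / (1 + d_v) ≤ 2α / (α + |S|) ≤ 2α (ln (1 + |S|/α) - ln (1 + (|S| - 1)/α))`,
and the bound follows by induction on `|S|`.
-/

open Finset Real

theorem log_one_add_div_add_inv_le {a s : ℝ} (ha : 0 < a) (hs : 0 ≤ s) :
    log (1 + s / a) + 1 / (a + s + 1) ≤ log (1 + (s + 1) / a) := by
  have hs' : 0 < 1 + s / a := by positivity
  have hs1 : 0 < 1 + (s + 1) / a := by positivity
  have key := one_sub_inv_le_log_of_pos (div_pos hs1 hs')
  rw [log_div hs1.ne' hs'.ne'] at key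
  have : 1 - ((1 + (s + 1) / a) / (1 + s / a))⁻¹ = 1 / (a + s + 1) := by
    field_simp
    ring
  linarith

variable {V : Type*} (D : V → V → Prop)

def IsIndepSet (S : Finset V) : Prop :=
  ∀ i ∈ S, ∀ j ∈ S, i ≠ j → ¬ D i j ∧ ¬ D j i

def inDegree [Fintype V] [DecidableRel D] (i : V) : ℕ :=
  (univ.filter fun j => D j i).card

variable {D}

theorem card_le_indepNum [Fintype V] {S : Finset V} (hS : IsIndepSet D S) :
    S.card ≤ indepNum D := by
  refine le_csSup ⟨Fintype.card V, ?_⟩ ⟨S, rfl, hS⟩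
  rintro n ⟨T, rfl, -⟩
  exact T.card_le_univ

variable [DecidableEq V]

theorem IsIndepSet.insert {I : Finset V} {v : V} (hI : IsIndepSet D I)
    (hv : ∀ j ∈ I, ¬ (D v j ∨ D j v)) : IsIndepSet D (insert v I) := by
  intro i hi j hj hij
  rw [mem_insert] at hi hj
  rcases hi with rfl | hi <;> rcases hj with hj | hj
  · exact absurd hj.symm hij
  · exact not_or.1 (hv j hj)
  · subst hj
    exact (not_or.1 (hv i hi)).symm
  · exact hI i hi j hj hij

variable [DecidableRel D]

theorem exists_card_adj_le_two_mul {S : Finset V} {m : ℕ} (hS : S.Nonempty)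
    (hdeg : ∀ i ∈ S, (S.filter fun j => D j i).card ≤ m) :
    ∃ v ∈ S, (S.filter fun j => D v j ∨ D j v).card ≤ 2 * m := by
  refine exists_le_of_sum_le hS ?_
  calc ∑ i ∈ S, (S.filter fun j => D i j ∨ D j i).card
      ≤ ∑ i ∈ S, ((S.filter fun j => D i j).card + (S.filter fun j => D j i).card) :=
        sum_le_sum fun i _ => by rw [filter_or]; exact card_union_le _ _
    _ = 2 * ∑ i ∈ S, (S.filter fun j => D j i).card := by
        rw [sum_add_distrib, two_mul]
        congr 1
        exact sum_card_bipartiteAbove_eq_sum_card_bipartiteBelow D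
    _ ≤ ∑ _i ∈ S, 2 * m := by
        rw [mul_sum]
        exact sum_le_sum fun i hi => Nat.mul_le_mul_left 2 (hdeg i hi)

theorem exists_isIndepSet_subset_card_le (m : ℕ) (S : Finset V)
    (hdeg : ∀ i ∈ S, (S.filter fun j => D j i).card ≤ m) :
    ∃ I ⊆ S, IsIndepSet D I ∧ S.card ≤ (2 * m + 1) * I.card := by
  induction S using Finset.strongInduction with
  | _ S ih =>
  rcases S.eq_empty_or_nonempty with rfl | hne
  · exact ⟨∅, empty_subset _, by simp [IsIndepSet], by simp⟩
  obtain ⟨v, hvS, hv⟩ := exists_card_adj_le_two_mul hne hdeg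
  set T := (S.erase v).filter fun j => ¬ (D v j ∨ D j v)
  have hTS : T ⊆ S := (filter_subset _ _).trans (erase_subset _ _)
  have hvT : v ∉ T := fun h => (mem_erase.1 (mem_filter.1 h).1).1 rfl
  obtain ⟨I, hIT, hI, hTI⟩ := ih T (ssubset_iff_of_subset hTS |>.2 ⟨v, hvS, hvT⟩)
    fun i hi => (card_le_card (filter_subset_filter _ hTS)).trans (hdeg i (hTS hi))
  refine ⟨insert v I, insert_subset hvS (hIT.trans hTS),
    hI.insert fun j hj => (mem_filter.1 (hIT hj)).2, ?_⟩
  have hST : S.card ≤ T.card + (2 * m + 1) := by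
    have hsplit := card_filter_add_card_filter_not (s := S.erase v) fun j => D v j ∨ D j v
    have hadj : ((S.erase v).filter fun j => D v j ∨ D j v).card ≤ 2 * m :=
      (card_le_card (filter_subset_filter _ (erase_subset _ _))).trans hv
    have := card_erase_add_one hvS
    simp only [T]
    omega
  rw [card_insert_of_notMem fun h => hvT (hIT h)]
  nlinarith

theorem card_le_of_forall_inDegree_le [Fintype V] {a m : ℕ}
    (ha : ∀ I, IsIndepSet D I → I.card ≤ a) {S : Finset V} (hS : ∀ i ∈ S, inDegree D i ≤ m) :
    S.card ≤ (2 * m + 1) * a := by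
  obtain ⟨I, -, hI, hSI⟩ := exists_isIndepSet_subset_card_le m S
    fun i hi => (card_le_card (filter_subset_filter _ (subset_univ S))).trans (hS i hi)
  exact hSI.trans (Nat.mul_le_mul_left _ (ha I hI))

theorem sum_inv_one_add_inDegree_le [Fintype V] {a : ℕ}
    (ha : ∀ I, IsIndepSet D I → I.card ≤ a) (S : Finset V) :
    ∑ i ∈ S, (1 : ℝ) / (1 + inDegree D i) ≤ 2 * a * log (1 + S.card / a) := by
  induction hn : S.card generalizing S with
  | zero => simp [card_eq_zero.1 hn]
  | succ n ih =>
    obtain ⟨v, hvS, hvmax⟩ := exists_max_image S (inDegree D) (card_pos.1 (by omega))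
    have hSa : n + 1 ≤ (2 * inDegree D v + 1) * a := hn ▸ card_le_of_forall_inDegree_le ha hvmax
    have ha0 : (0 : ℝ) < a := by
      have : a ≠ 0 := by rintro rfl; simp at hSa
      positivity
    have hv : (1 : ℝ) / (1 + inDegree D v) ≤ 2 * a * (1 / (a + n + 1)) := by
      have hSa' : ((n : ℝ) + 1) ≤ (2 * inDegree D v + 1) * a := by exact_mod_cast hSa
      rw [mul_one_div, div_le_div_iff₀ (by positivity) (by positivity)]
      linarith
    have hrest := ih (S.erase v) (by rw [card_erase_of_mem hvS, hn]; rfl)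
    rw [← add_sum_erase S _ hvS]
    calc (1 : ℝ) / (1 + inDegree D v) + ∑ i ∈ S.erase v, 1 / (1 + (inDegree D i : ℝ))
        ≤ 2 * a * (log (1 + n / a) + 1 / (a + n + 1)) := by rw [mul_add]; linarith
      _ ≤ 2 * a * log (1 + ↑(n + 1) / a) := by
        push_cast
        gcongr
        exact log_one_add_div_add_inv_le ha0 n.cast_nonneg

theorem stmt2_general (K : ℕ) (D : Fin K → Fin K → Prop) [DecidableRel D] :
    ∑ i : Fin K, (1 : ℝ) / (1 + ((Finset.univ.filter (fun j => D j i)).card : ℝ))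
      ≤ 2 * (indepNum D : ℝ) * Real.log (1 + (K : ℝ) / (indepNum D : ℝ)) := by
  have h := sum_inv_one_add_inDegree_le (D := D) (fun _ hI => card_le_indepNum hI) univ
  rwa [card_univ, Fintype.card_fin] at h

/-- For a directed graph on `K ≥ 1` vertices without self-loops, with in-degrees
`d_i⁻` and independence number `α`, `∑_i 1/(1 + d_i⁻) ≤ 2 α ln(1 + K/α)`. -/
theorem stmt2 (K : ℕ) (hK : 1 ≤ K) (D : Fin K → Fin K → Prop) [DecidableRel D]
    (hirr : ∀ i, ¬ D i i) :
    ∑ i : Fin K, (1 : ℝ) / (1 + ((Finset.univ.filter (fun j => D j i)).card : ℝ))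
      ≤ 2 * (indepNum D : ℝ) * Real.log (1 + (K : ℝ) / (indepNum D : ℝ)) :=
  stmt2_general K D
end

section
/- Let G be a directed graph on K vertices with independence number α and domination number γ. The dominating set R produced by the Greedy Set Cover algorithm (repeatedly picking the vertex dominating the largest number of not-yet-dominated vertices, including itself, and removing all vertices it dominates) satisfies |R| ≤ ⌈2α ln K⌉ + 1. -/
open scoped BigOperators

/-- The set of vertices dominated by `i` : `i` itself together with its out-neighbors. -/
def cover {K : ℕ} (D : Fin K → Fin K → Prop) [DecidableRel D] (i : Fin K) :
    Finset (Fin K) :=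
  insert i (Finset.univ.filter fun j => D i j)

/-! Let `S` be the set of vertices not yet dominated and `c` the largest number of them that a
single vertex dominates. By double counting arcs, on average a vertex of `S` has at most `2c - 1`
undirected neighbours in `S` (itself included), so repeatedly keeping such a vertex and discarding
its neighbours yields an independent set of size at least `|S| / (2c - 1)`; hence `|S| ≤ α (2c - 1)`
and the greedy step removes at least `|S| / (2α)` vertices. After `N = ⌈2α ln K⌉` steps at most
`K (1 - 1/(2α))^N ≤ K e^{-N/(2α)} ≤ 1` vertex is left, and one more step removes it. -/

open Finset

section Independence

variable {V : Type*} (D : V → V → Prop)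

def IsIndep (T : Finset V) : Prop :=
  ∀ i ∈ T, ∀ j ∈ T, i ≠ j → ¬ D i j ∧ ¬ D j i

def undirNbhd [DecidableEq V] [DecidableRel D] (S : Finset V) (v : V) : Finset V :=
  S.filter fun u => u = v ∨ D v u ∨ D u v

variable {D}

theorem IsIndep.insert [DecidableEq V] {T : Finset V} {v : V} (hT : IsIndep D T)
    (hv : ∀ u ∈ T, ¬ D v u ∧ ¬ D u v) : IsIndep D (insert v T) := by
  intro i hi j hj hij
  rw [mem_insert] at hi hj
  rcases hi with rfl | hi <;> rcases hj with rfl | hj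
  · exact absurd rfl hij
  · exact hv j hj
  · exact (hv i hi).symm
  · exact hT i hi j hj hij

theorem IsIndep.card_le_indepNum [Fintype V] {T : Finset V} (hT : IsIndep D T) :
    T.card ≤ indepNum D :=
  le_csSup ⟨Fintype.card V, fun _ ⟨S, hS, _⟩ => hS ▸ card_le_univ S⟩ ⟨T, rfl, hT⟩

end Independence

section Cover

variable {K : ℕ} {D : Fin K → Fin K → Prop} [DecidableRel D]

theorem mem_cover {i j : Fin K} : j ∈ cover D i ↔ j = i ∨ D i j := by
  simp [cover]

theorem card_inter_cover {S : Finset (Fin K)} {u : Fin K} (hu : u ∈ S) :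
    (S ∩ cover D u).card = (S.filter fun v => v ≠ u ∧ D u v).card + 1 := by
  have : S ∩ cover D u = insert u (S.filter fun v => v ≠ u ∧ D u v) := by
    ext v
    by_cases hvu : v = u
    · simp [hvu, hu, mem_cover]
    · simp [hvu, mem_cover]
  rw [this, card_insert_of_notMem (by simp)]

theorem card_undirNbhd_le (S : Finset (Fin K)) (v : Fin K) :
    (undirNbhd D S v).card ≤ (S ∩ cover D v).card + (S.filter fun u => u ≠ v ∧ D u v).card := by
  refine (card_le_card fun u hu => ?_).trans (card_union_le _ _)
  simp only [undirNbhd, mem_filter] at hu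
  by_cases huv : u = v <;> simp_all [mem_cover]

/-- Double counting: inside `S`, in-degrees (not counting loops) sum to the out-degrees. -/
theorem sum_card_undirNbhd_le (S : Finset (Fin K)) :
    ∑ v ∈ S, (undirNbhd D S v).card ≤ ∑ v ∈ S, (2 * (S ∩ cover D v).card - 1) := by
  have hdouble : ∑ v ∈ S, (S.filter fun u => u ≠ v ∧ D u v).card
      = ∑ u ∈ S, (S.filter fun v => v ≠ u ∧ D u v).card := by
    simp only [card_filter]
    rw [sum_comm]
    simp only [ne_comm]
  calc ∑ v ∈ S, (undirNbhd D S v).card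
      ≤ ∑ v ∈ S, ((S ∩ cover D v).card + (S.filter fun u => u ≠ v ∧ D u v).card) :=
        sum_le_sum fun v _ => card_undirNbhd_le S v
    _ = ∑ v ∈ S, ((S ∩ cover D v).card + (S.filter fun u => u ≠ v ∧ D v u).card) := by
        rw [sum_add_distrib, sum_add_distrib, hdouble]
    _ = ∑ v ∈ S, (2 * (S ∩ cover D v).card - 1) := by
        refine sum_congr rfl fun v hv => ?_
        rw [card_inter_cover hv]
        omega

theorem exists_card_undirNbhd_le {S : Finset (Fin K)} (hS : S.Nonempty) {c : ℕ}
    (hc : ∀ v ∈ S, (S ∩ cover D v).card ≤ c) : ∃ v ∈ S, (undirNbhd D S v).card ≤ 2 * c - 1 :=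
  exists_le_of_sum_le hS <| (sum_card_undirNbhd_le S).trans <|
    sum_le_sum fun v hv => Nat.sub_le_sub_right (Nat.mul_le_mul_left 2 (hc v hv)) 1

/-- Turán-type bound: repeatedly keep a vertex of small undirected neighbourhood and discard
that neighbourhood. -/
theorem exists_isIndep_subset_card_le (S : Finset (Fin K)) {c : ℕ}
    (hc : ∀ v ∈ S, (S ∩ cover D v).card ≤ c) :
    ∃ T ⊆ S, IsIndep D T ∧ S.card ≤ T.card * (2 * c - 1) := by
  induction S using Finset.strongInduction with
  | H S ih =>
  rcases S.eq_empty_or_nonempty with rfl | hS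
  · exact ⟨∅, empty_subset _, by simp [IsIndep], by simp⟩
  obtain ⟨v, hvS, hv⟩ := exists_card_undirNbhd_le hS hc
  have hvN : v ∈ undirNbhd D S v := by simp [undirNbhd, hvS]
  have hNS : undirNbhd D S v ⊆ S := filter_subset _ _
  obtain ⟨T, hTS, hT, hcard⟩ := ih (S \ undirNbhd D S v) (sdiff_ssubset hNS ⟨v, hvN⟩)
    fun u hu => (card_le_card (inter_subset_inter_right sdiff_subset)).trans
      (hc u (sdiff_subset hu))
  have hfar : ∀ u ∈ T, ¬ D v u ∧ ¬ D u v := fun u hu => by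
    have := (mem_sdiff.1 (hTS hu)).2
    simp only [undirNbhd, mem_filter, not_and, not_or] at this
    exact (this (sdiff_subset (hTS hu))).2
  have hvT : v ∉ T := fun h => (mem_sdiff.1 (hTS h)).2 hvN
  refine ⟨insert v T, insert_subset hvS (hTS.trans sdiff_subset), hT.insert hfar, ?_⟩
  rw [card_insert_of_notMem hvT, add_one_mul, ← card_sdiff_add_card_eq_card hNS]
  exact add_le_add hcard hv

theorem card_le_indepNum_mul {S : Finset (Fin K)} {c : ℕ}
    (hc : ∀ v ∈ S, (S ∩ cover D v).card ≤ c) : S.card ≤ indepNum D * (2 * c - 1) := by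
  obtain ⟨T, -, hT, hcard⟩ := exists_isIndep_subset_card_le S hc
  exact hcard.trans (Nat.mul_le_mul_right _ hT.card_le_indepNum)

theorem greedy_card_sdiff_cover {S : Finset (Fin K)} {i : Fin K}
    (hmax : ∀ j ∈ S, (S ∩ cover D j).card ≤ (S ∩ cover D i).card) :
    2 * indepNum D * (S \ cover D i).card + S.card ≤ 2 * indepNum D * S.card := by
  have hS : S.card ≤ 2 * indepNum D * (S ∩ cover D i).card :=
    (card_le_indepNum_mul hmax).trans <|
      (Nat.mul_le_mul_left _ (Nat.sub_le _ _)).trans_eq (by ring)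
  rw [← card_sdiff_add_card_inter S (cover D i)] at hS ⊢
  nlinarith

theorem exists_lt_mem_cover {Vs : ℕ → Finset (Fin K)} {is : ℕ → Fin K} {s : ℕ}
    (hVs : ∀ t < s, Vs (t + 1) = Vs t \ cover D (is t)) {j : Fin K} (h0 : j ∈ Vs 0)
    (hs : j ∉ Vs s) : ∃ t < s, j ∈ cover D (is t) := by
  induction s with
  | zero => exact absurd h0 hs
  | succ s ih =>
    by_cases hjs : j ∈ Vs s
    · rw [hVs s s.lt_succ_self, mem_sdiff, not_and_not_right] at hs
      exact ⟨s, s.lt_succ_self, hs hjs⟩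
    · obtain ⟨t, ht, hjt⟩ := ih (fun t ht => hVs t (ht.trans s.lt_succ_self)) hjs
      exact ⟨t, ht.trans s.lt_succ_self, hjt⟩

end Cover

theorem mul_one_sub_inv_pow_ceil_le_one {m x : ℝ} (hm : 1 ≤ m) (hx : 0 < x) :
    x * (1 - m⁻¹) ^ ⌈m * Real.log x⌉₊ ≤ 1 := by
  set N := ⌈m * Real.log x⌉₊
  have hr : 0 ≤ 1 - m⁻¹ := sub_nonneg.2 (inv_le_one_of_one_le₀ hm)
  have hexp : (1 - m⁻¹) ^ N ≤ Real.exp (-Real.log x) :=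
    calc (1 - m⁻¹) ^ N ≤ Real.exp (-m⁻¹) ^ N := by
          gcongr
          linarith [Real.add_one_le_exp (-m⁻¹)]
      _ = Real.exp (N * -m⁻¹) := (Real.exp_nat_mul _ _).symm
      _ ≤ Real.exp (-Real.log x) := by
          gcongr
          rw [mul_neg, neg_le_neg_iff, ← div_eq_mul_inv, le_div_iff₀ (by linarith)]
          linarith [Nat.le_ceil (m * Real.log x)]
  calc x * (1 - m⁻¹) ^ N ≤ x * Real.exp (-Real.log x) := by gcongr
    _ = 1 := by rw [Real.exp_neg, Real.exp_log hx, mul_inv_cancel₀ hx.ne']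

section Decay

variable {a : ℕ → ℕ} {m : ℕ}

theorem le_mul_one_sub_inv_pow (hm : 0 < m) (h : ∀ t, a t ≠ 0 → m * a (t + 1) + a t ≤ m * a t)
    {t : ℕ} (ht : ∀ u < t, a u ≠ 0) : (a t : ℝ) ≤ a 0 * (1 - (m : ℝ)⁻¹) ^ t := by
  induction t with
  | zero => simp
  | succ t ih =>
    have hm' : (0 : ℝ) < m := by exact_mod_cast hm
    have hstep : (m : ℝ) * a (t + 1) + a t ≤ m * a t := by exact_mod_cast h t (ht t t.lt_succ_self)
    have hr : 0 ≤ 1 - (m : ℝ)⁻¹ := sub_nonneg.2 (inv_le_one_of_one_le₀ (by exact_mod_cast hm))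
    calc (a (t + 1) : ℝ) ≤ (1 - (m : ℝ)⁻¹) * a t := by
          rw [sub_mul, one_mul, le_sub_iff_add_le, ← mul_le_mul_iff_of_pos_left hm', mul_add,
            ← mul_assoc, mul_inv_cancel₀ hm'.ne', one_mul]
          exact hstep
      _ ≤ (1 - (m : ℝ)⁻¹) * (a 0 * (1 - (m : ℝ)⁻¹) ^ t) :=
          mul_le_mul_of_nonneg_left (ih fun u hu => ht u (hu.trans t.lt_succ_self)) hr
      _ = a 0 * (1 - (m : ℝ)⁻¹) ^ (t + 1) := by ring

/-- The final step uses integrality: `a_N ≤ 1` forces `a_{N+1} = 0`. -/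
theorem exists_le_ceil_mul_log_eq_zero (h : ∀ t, a t ≠ 0 → m * a (t + 1) + a t ≤ m * a t) :
    ∃ s ≤ ⌈(m : ℝ) * Real.log (a 0)⌉₊ + 1, a s = 0 := by
  set N := ⌈(m : ℝ) * Real.log (a 0)⌉₊
  by_contra! hne
  have ha0 : a 0 ≠ 0 := hne 0 (Nat.zero_le _)
  rcases Nat.eq_zero_or_pos m with rfl | hm
  · simpa [ha0] using h 0 ha0
  have haN : a N ≤ 1 := by
    have hbound := le_mul_one_sub_inv_pow hm h (t := N) fun u hu => hne u (by omega)
    have := mul_one_sub_inv_pow_ceil_le_one (m := m) (x := a 0) (by exact_mod_cast hm)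
      (by exact_mod_cast Nat.pos_of_ne_zero ha0)
    exact_mod_cast hbound.trans this
  have hstep := h N (hne N (by omega))
  have hN1 := Nat.pos_of_ne_zero (hne (N + 1) le_rfl)
  have hN := Nat.pos_of_ne_zero (hne N (by omega))
  nlinarith

end Decay

theorem stmt3_general (K : ℕ) (D : Fin K → Fin K → Prop) [DecidableRel D]
    (Vs : ℕ → Finset (Fin K)) (is : ℕ → Fin K)
    (h0 : Vs 0 = Finset.univ)
    (hstep : ∀ s, (Vs s).Nonempty →
      is s ∈ Vs s ∧
      (∀ j ∈ Vs s, ((Vs s) ∩ cover D j).card ≤ ((Vs s) ∩ cover D (is s)).card) ∧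
      Vs (s + 1) = Vs s \ cover D (is s)) :
    ∃ s ≤ Nat.ceil (2 * (indepNum D : ℝ) * Real.log K) + 1,
      Vs s = ∅ ∧
      (∀ j : Fin K, j ∉ (Finset.range s).image is →
        ∃ i ∈ (Finset.range s).image is, D i j) := by
  obtain ⟨s, hsN, hs⟩ := exists_le_ceil_mul_log_eq_zero (a := fun t => (Vs t).card)
    (m := 2 * indepNum D) fun t ht => by
      obtain ⟨-, hmax, hnext⟩ := hstep t (card_ne_zero.1 ht)
      simpa only [hnext] using greedy_card_sdiff_cover hmax
  simp only [h0, card_univ, Fintype.card_fin, Nat.cast_mul, Nat.cast_ofNat] at hsN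
  have hex : ∃ s, Vs s = ∅ := ⟨s, card_eq_zero.1 hs⟩
  refine ⟨Nat.find hex, (Nat.find_min' hex (card_eq_zero.1 hs)).trans hsN, Nat.find_spec hex,
    fun j hj => ?_⟩
  have hVs : ∀ t < Nat.find hex, Vs (t + 1) = Vs t \ cover D (is t) := fun t ht =>
    (hstep t (nonempty_iff_ne_empty.2 (Nat.find_min hex ht))).2.2
  obtain ⟨t, ht, hjt⟩ := exists_lt_mem_cover hVs (h0 ▸ mem_univ j) (by simp [Nat.find_spec hex])
  have hit : is t ∈ (range (Nat.find hex)).image is := mem_image_of_mem is (mem_range.2 ht)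
  rcases mem_cover.1 hjt with rfl | hD
  · exact absurd hit hj
  · exact ⟨is t, hit, hD⟩

/-- The Greedy Set Cover algorithm (at each step pick a vertex dominating the
largest number of not-yet-dominated vertices and remove all vertices it
dominates) terminates within `⌈2 α ln K⌉ + 1` steps, producing a dominating
set of at most that size. -/
theorem stmt3 (K : ℕ) (hK : 1 ≤ K) (D : Fin K → Fin K → Prop) [DecidableRel D]
    (hirr : ∀ i, ¬ D i i)
    (Vs : ℕ → Finset (Fin K)) (is : ℕ → Fin K)
    (h0 : Vs 0 = Finset.univ)
    (hstep : ∀ s, (Vs s).Nonempty →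
      is s ∈ Vs s ∧
      (∀ j ∈ Vs s, ((Vs s) ∩ cover D j).card ≤ ((Vs s) ∩ cover D (is s)).card) ∧
      Vs (s + 1) = Vs s \ cover D (is s)) :
    ∃ s ≤ Nat.ceil (2 * (indepNum D : ℝ) * Real.log K) + 1,
      Vs s = ∅ ∧
      (∀ j : Fin K, j ∉ (Finset.range s).image is →
        ∃ i ∈ (Finset.range s).image is, D i j) :=
  stmt3_general K D Vs is h0 hstep
end

section
/- Let G = (V,D) be a directed graph on V = {1,...,K}, where each vertex is considered an in-neighbor of itself. If s = (s_1,...,s_K) maximizes min_{i∈V} Σ_{j: j→i} s_j over the probability simplex, then max_{i∈V} 1/(Σ_{j: j→i} s_j) ≤ mas(G), the size of a maximum induced acyclic subgraph of G. -/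
open scoped BigOperators

/-!
A maximum induced acyclic vertex set `S` dominates the graph: if a vertex `i ∉ S` had no
in-neighbour in `S`, a directed cycle in `S ∪ {i}` would have to enter `i` from `S ∪ {i}`,
which is impossible without loops, so `S ∪ {i}` would be a larger acyclic set. The uniform
distribution on `S` therefore gives every closed in-neighbourhood weight at least `1 / |S|`,
and an optimal `s` does at least as well.
-/

open Finset

variable {V : Type*}

/-- The weight `∑_{j → i} s_j` of the closed in-neighbourhood of `i`. -/
def inNbhdSum [Fintype V] (D : V → V → Prop) [DecidableRel D] (s : V → ℝ) (i : V) : ℝ :=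
  s i + ∑ j ∈ univ.filter (fun j => D j i), s j

lemma le_inNbhdSum_of_eq_or_adj [Fintype V] {D : V → V → Prop} [DecidableRel D]
    {s : V → ℝ} (hs : ∀ k, 0 ≤ s k) {i j : V} (hji : j = i ∨ D j i) :
    s j ≤ inNbhdSum D s i := by
  have hsum_nonneg : 0 ≤ ∑ k ∈ univ.filter (fun k => D k i), s k :=
    sum_nonneg fun k _ => hs k
  unfold inNbhdSum
  rcases hji with rfl | hji
  · linarith
  · have : s j ≤ ∑ k ∈ univ.filter (fun k => D k i), s k :=
      single_le_sum (fun k _ => hs k) (by simpa using hji)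
    linarith [hs i]

lemma exists_simplex_inv_card_le_inNbhdSum [Fintype V] [DecidableEq V] {D : V → V → Prop}
    [DecidableRel D] {S : Finset V} (hS : S.Nonempty) (hdom : ∀ i, ∃ j ∈ S, j = i ∨ D j i) :
    ∃ t : V → ℝ, (∀ i, 0 ≤ t i) ∧ ∑ i, t i = 1 ∧
      ∀ i, (#S : ℝ)⁻¹ ≤ inNbhdSum D t i := by
  have hcard : (0 : ℝ) < #S := by exact_mod_cast hS.card_pos
  set t : V → ℝ := fun j => if j ∈ S then (#S : ℝ)⁻¹ else 0
  have ht_nonneg : ∀ j, 0 ≤ t j := fun j => by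
    simp only [t]
    split <;> positivity
  refine ⟨t, ht_nonneg, ?_, fun i => ?_⟩
  · simp only [t, sum_ite_mem, univ_inter, sum_const, nsmul_eq_mul]
    field_simp
  · obtain ⟨j, hjS, hji⟩ := hdom i
    simpa [t, hjS] using le_inNbhdSum_of_eq_or_adj ht_nonneg hji

lemma exists_succ_eq_of_closed {n : ℕ} {f : Fin (n + 2) → V}
    (hclosed : f 0 = f (Fin.last (n + 1))) (k : Fin (n + 2)) :
    ∃ m : Fin (n + 1), f m.succ = f k := by
  by_cases hk : k = 0
  · exact ⟨Fin.last n, by rw [Fin.succ_last, hk, hclosed]⟩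
  · exact ⟨k.pred hk, by rw [Fin.succ_pred]⟩

namespace AcyclicOn

variable {D : V → V → Prop}

lemma empty_s7 : AcyclicOn D ∅ := fun _ _ hmem => absurd (hmem 0) (notMem_empty _)

lemma exists_adj_of_not_insert [DecidableEq V] (hirr : ∀ i, ¬ D i i) {S : Finset V}
    (hS : AcyclicOn D S) {i : V} (hins : ¬ AcyclicOn D (insert i S)) : ∃ j ∈ S, D j i := by
  simp only [AcyclicOn, not_forall, not_not] at hins
  obtain ⟨n, f, hmem, harc, hclosed⟩ := hins
  have hvisits : ∃ k, f k = i := by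
    by_contra! hx
    exact hS n f (fun k => (mem_insert.mp (hmem k)).resolve_left (hx k)) harc hclosed
  obtain ⟨k, rfl⟩ := hvisits
  obtain ⟨m, hm⟩ := exists_succ_eq_of_closed hclosed k
  have hadj : D (f m.castSucc) (f k) := hm ▸ harc m
  refine ⟨f m.castSucc, (mem_insert.mp (hmem _)).resolve_left fun h => ?_, hadj⟩
  exact hirr _ (h ▸ hadj)

end AcyclicOn

lemma mas_bddAbove [Fintype V] (D : V → V → Prop) :
    BddAbove {n | ∃ S : Finset V, #S = n ∧ AcyclicOn D S} := by
  refine ⟨Fintype.card V, ?_⟩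
  rintro n ⟨S, rfl, -⟩
  exact card_le_univ S

lemma le_mas [Fintype V] {D : V → V → Prop} {S : Finset V} (hS : AcyclicOn D S) :
    #S ≤ mas D :=
  le_csSup (mas_bddAbove D) ⟨S, rfl, hS⟩

lemma exists_acyclicOn_card_eq_mas [Fintype V] (D : V → V → Prop) :
    ∃ S : Finset V, #S = mas D ∧ AcyclicOn D S :=
  Nat.sSup_mem (by exact ⟨0, ∅, card_empty, AcyclicOn.empty_s7⟩) (mas_bddAbove D)

lemma AcyclicOn.dominating_of_card_eq_mas [Fintype V] [DecidableEq V] {D : V → V → Prop}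
    (hirr : ∀ i, ¬ D i i) {S : Finset V} (hS : AcyclicOn D S) (hcard : #S = mas D) (i : V) :
    ∃ j ∈ S, j = i ∨ D j i := by
  by_cases hi : i ∈ S
  · exact ⟨i, hi, Or.inl rfl⟩
  · have hins : ¬ AcyclicOn D (insert i S) := fun h => by
      have := le_mas h
      rw [card_insert_of_notMem hi, hcard] at this
      omega
    obtain ⟨j, hj, hji⟩ := hS.exists_adj_of_not_insert hirr hins
    exact ⟨j, hj, Or.inr hji⟩

theorem stmt7_general (K : ℕ) (D : Fin K → Fin K → Prop) [DecidableRel D]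
    (hirr : ∀ i, ¬ D i i)
    (hne : (Finset.univ : Finset (Fin K)).Nonempty)
    (s : Fin K → ℝ)
    (hopt : ∀ s' : Fin K → ℝ, (∀ i, 0 ≤ s' i) → (∑ i, s' i = 1) →
      Finset.univ.inf' hne (fun i : Fin K =>
          s' i + ∑ j ∈ Finset.univ.filter (fun j => D j i), s' j)
        ≤ Finset.univ.inf' hne (fun i : Fin K =>
          s i + ∑ j ∈ Finset.univ.filter (fun j => D j i), s j)) :
    ∀ i : Fin K,
      (1 : ℝ) / (mas D : ℝ)
        ≤ s i + ∑ j ∈ Finset.univ.filter (fun j => D j i), s j := by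
  intro i
  obtain ⟨S, hcard, hS⟩ := exists_acyclicOn_card_eq_mas D
  have hdom := hS.dominating_of_card_eq_mas hirr hcard
  have hS_ne : S.Nonempty := by
    obtain ⟨v, -⟩ := hne
    obtain ⟨j, hj, -⟩ := hdom v
    exact ⟨j, hj⟩
  obtain ⟨t, ht_nonneg, ht_sum, ht⟩ := exists_simplex_inv_card_le_inNbhdSum hS_ne hdom
  rw [one_div, ← hcard]
  calc (#S : ℝ)⁻¹ ≤ univ.inf' hne (inNbhdSum D t) := le_inf' hne _ fun j _ => ht j
    _ ≤ univ.inf' hne (inNbhdSum D s) := hopt t ht_nonneg ht_sum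
    _ ≤ inNbhdSum D s i := inf'_le _ (mem_univ i)

/-- If `s` maximizes `min_i ∑_{j : j→i} s_j` (where `j → i` means `j = i` or
`(j,i) ∈ D`) over the probability simplex, then
`max_i 1/∑_{j→i} s_j ≤ mas(G)`, i.e. `∑_{j→i} s_j ≥ 1/mas(G)` for every `i`. -/
theorem stmt7 (K : ℕ) (D : Fin K → Fin K → Prop) [DecidableRel D]
    (hirr : ∀ i, ¬ D i i)
    (hne : (Finset.univ : Finset (Fin K)).Nonempty)
    (s : Fin K → ℝ) (hnn : ∀ i, 0 ≤ s i) (hsum : ∑ i, s i = 1)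
    (hopt : ∀ s' : Fin K → ℝ, (∀ i, 0 ≤ s' i) → (∑ i, s' i = 1) →
      Finset.univ.inf' hne (fun i : Fin K =>
          s' i + ∑ j ∈ Finset.univ.filter (fun j => D j i), s' j)
        ≤ Finset.univ.inf' hne (fun i : Fin K =>
          s i + ∑ j ∈ Finset.univ.filter (fun j => D j i), s j)) :
    ∀ i : Fin K,
      (1 : ℝ) / (mas D : ℝ)
        ≤ s i + ∑ j ∈ Finset.univ.filter (fun j => D j i), s j :=
  stmt7_general K D hirr hne s hopt
end

section
/- Fix a directed graph G = (V,D) on V = {1,...,K} (each vertex an in-neighbor of itself), a probability distribution p on V, and a vertex i with in-degree d_i^- (not counting the self-loop). If f is a uniformly random permutation of V, then the expectation of p_{f(i)} / Σ_{j : j→i} p_{f(j)} equals 1/(1 + d_i^-). -/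
/-!
Write `T` for the closed in-neighbourhood of `i`. Precomposing `f` with the transposition `(i j)`,
for `j ∈ T`, is a bijection of the permutations that fixes `∑_{k ∈ T} p_{f(k)}` and exchanges
`p_{f(i)}` with `p_{f(j)}`; so every `j ∈ T` contributes the same total as `i`. Summing over `j ∈ T`
gives `1` for each `f`, hence `#T` times the sum for `i` equals the number `K!` of permutations.
-/

open Finset

variable {α : Type*} [DecidableEq α]

lemma sum_comp_mul_swap_of_mem {T : Finset α} {i j : α} (hi : i ∈ T) (hj : j ∈ T)
    (w : α → ℝ) (f : Equiv.Perm α) :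
    ∑ k ∈ T, w ((f * Equiv.swap i j) k) = ∑ k ∈ T, w (f k) := by
  refine Equiv.Perm.sum_comp (Equiv.swap i j) T (fun k => w (f k)) fun k hk => ?_
  obtain ⟨-, rfl | rfl⟩ := Equiv.swap_apply_ne_self_iff.mp hk <;> assumption

lemma sum_perm_div_sum_eq_of_mem [Fintype α] {T : Finset α} {i j : α} (hi : i ∈ T) (hj : j ∈ T)
    (w : α → ℝ) :
    ∑ f : Equiv.Perm α, w (f j) / ∑ k ∈ T, w (f k)
      = ∑ f : Equiv.Perm α, w (f i) / ∑ k ∈ T, w (f k) := by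
  rw [← Equiv.sum_comp (Equiv.mulRight (Equiv.swap i j))]
  refine sum_congr rfl fun f _ => ?_
  rw [Equiv.coe_mulRight, sum_comp_mul_swap_of_mem hi hj, Equiv.Perm.mul_apply,
    Equiv.swap_apply_right]

theorem sum_perm_div_sum_of_mem [Fintype α] {T : Finset α} {i : α} (hi : i ∈ T) {w : α → ℝ}
    (hw : ∀ a, 0 < w a) :
    ∑ f : Equiv.Perm α, w (f i) / ∑ k ∈ T, w (f k) = (Fintype.card α).factorial / #T := by
  have hT : (#T : ℝ) ≠ 0 := by exact_mod_cast (card_pos.mpr ⟨i, hi⟩).ne'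
  have hone (f : Equiv.Perm α) : ∑ j ∈ T, w (f j) / ∑ k ∈ T, w (f k) = 1 := by
    rw [← sum_div, div_self (sum_pos (fun k _ => hw (f k)) ⟨i, hi⟩).ne']
  rw [eq_div_iff hT, mul_comm]
  calc (#T : ℝ) * ∑ f : Equiv.Perm α, w (f i) / ∑ k ∈ T, w (f k)
      = ∑ j ∈ T, ∑ f : Equiv.Perm α, w (f j) / ∑ k ∈ T, w (f k) := by
        rw [sum_congr rfl fun j hj => sum_perm_div_sum_eq_of_mem hi hj w, sum_const,
          nsmul_eq_mul]
    _ = ∑ f : Equiv.Perm α, ∑ j ∈ T, w (f j) / ∑ k ∈ T, w (f k) := sum_comm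
    _ = (Fintype.card α).factorial := by
        simp only [hone, sum_const, card_univ, Fintype.card_perm, nsmul_eq_mul, mul_one]

theorem stmt9_general (K : ℕ) (D : Fin K → Fin K → Prop) [DecidableRel D]
    (hirr : ∀ i, ¬ D i i)
    (p : Fin K → ℝ) (hpos : ∀ i, 0 < p i)
    (i : Fin K) :
    (∑ f : Equiv.Perm (Fin K),
        p (f i) / (p (f i) + ∑ j ∈ Finset.univ.filter (fun j => D j i), p (f j)))
      / (Nat.factorial K : ℝ)
    = 1 / (1 + ((Finset.univ.filter (fun j => D j i)).card : ℝ)) := by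
  set S := univ.filter (fun j => D j i)
  have hiS : i ∉ S := by simp [S, hirr i]
  have hsum := sum_perm_div_sum_of_mem (mem_insert_self i S) hpos
  simp only [sum_insert hiS, card_insert_of_notMem hiS, Fintype.card_fin] at hsum
  rw [hsum]
  field_simp
  push_cast
  ring

/-- For a uniformly random permutation `f` of the vertices, the expectation of
`p_{f(i)} / ∑_{j : j→i} p_{f(j)}` equals `1/(1 + d_i⁻)`, where `d_i⁻` is the
in-degree of `i` and `j → i` means `j = i` or `(j,i) ∈ D`. -/
theorem stmt9 (K : ℕ) (D : Fin K → Fin K → Prop) [DecidableRel D]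
    (hirr : ∀ i, ¬ D i i)
    (p : Fin K → ℝ) (hpos : ∀ i, 0 < p i) (hsum : ∑ i, p i = 1)
    (i : Fin K) :
    (∑ f : Equiv.Perm (Fin K),
        p (f i) / (p (f i) + ∑ j ∈ Finset.univ.filter (fun j => D j i), p (f j)))
      / (Nat.factorial K : ℝ)
    = 1 / (1 + ((Finset.univ.filter (fun j => D j i)).card : ℝ)) :=
  stmt9_general K D hirr p hpos i
end

section
/- Let G be a directed graph on V = {1,...,K} (with self-loops implicit) and p a probability distribution on V with q_i := Σ_{j→i} p_j > 0 for all i, satisfying Σ_i p_i/q_i ≤ M. Then Σ_{i=1}^K p_i (Σ_{j : i→j} p_j/q_j)² ≤ M. -/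
/-!
Write `S i = ∑_{j : i→j} p_j/q_j` and `T = ∑_j p_j/q_j ≤ M`. Exchanging the order of summation,
`∑_i p_i S_i = ∑_j (p_j/q_j) ∑_{i→j} p_i = ∑_j p_j = 1`, and since `0 ≤ S_i ≤ T`,
`∑_i p_i S_i² ≤ T ∑_i p_i S_i = T ≤ M`.
-/

open Finset

theorem sum_mul_sq_le_mul_sum_mul {ι : Type*} (s : Finset ι) (p S : ι → ℝ) (T : ℝ)
    (hp : ∀ i ∈ s, 0 ≤ p i) (hS : ∀ i ∈ s, 0 ≤ S i) (hST : ∀ i ∈ s, S i ≤ T) :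
    ∑ i ∈ s, p i * S i ^ 2 ≤ T * ∑ i ∈ s, p i * S i := by
  rw [mul_sum]
  refine sum_le_sum fun i hi => ?_
  calc p i * S i ^ 2 = p i * S i * S i := by ring
    _ ≤ p i * S i * T := mul_le_mul_of_nonneg_left (hST i hi) (mul_nonneg (hp i hi) (hS i hi))
    _ = T * (p i * S i) := by ring

section Neighbourhood

variable {ι : Type*} [Fintype ι] (R : ι → ι → Prop) [DecidableRel R]

theorem sum_mul_sum_filter_comm (p f : ι → ℝ) :
    ∑ i, p i * ∑ j with R i j, f j = ∑ j, f j * ∑ i with R i j, p i := by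
  simp only [mul_sum, sum_filter]
  rw [sum_comm]
  refine sum_congr rfl fun j _ => sum_congr rfl fun i _ => ?_
  split_ifs <;> ring

theorem sum_mul_sum_filter_div_eq_sum (p q : ι → ℝ)
    (hq : ∀ j, q j = ∑ i with R i j, p i) (hq0 : ∀ j, q j ≠ 0) :
    ∑ i, p i * ∑ j with R i j, p j / q j = ∑ j, p j := by
  rw [sum_mul_sum_filter_comm]
  exact sum_congr rfl fun j _ => by rw [← hq, div_mul_cancel₀ _ (hq0 j)]

end Neighbourhood

theorem sum_filter_eq_or_eq_add {ι : Type*} [Fintype ι] [DecidableEq ι] (D : ι → ι → Prop)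
    [DecidableRel D] (hirr : ∀ i, ¬ D i i) (p : ι → ℝ) (j : ι) :
    ∑ i with j = i ∨ D i j, p i = p j + ∑ i with D i j, p i := by
  have hset : univ.filter (fun i => j = i ∨ D i j) = insert j (univ.filter fun i => D i j) := by
    ext i
    simp [eq_comm]
  rw [hset, sum_insert (by simp [hirr j])]

theorem stmt14_general (K : ℕ) (D : Fin K → Fin K → Prop) [DecidableRel D]
    (hirr : ∀ i, ¬ D i i)
    (M : ℝ)
    (p : Fin K → ℝ) (hpnn : ∀ i, 0 ≤ p i) (hpsum : ∑ i, p i = 1)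
    (q : Fin K → ℝ)
    (hq : ∀ i, q i = p i + ∑ j ∈ Finset.univ.filter (fun j => D j i), p j)
    (hqpos : ∀ i, 0 < q i)
    (h1 : ∑ i : Fin K, p i / q i ≤ M) :
    ∑ i : Fin K, p i *
        (∑ j ∈ Finset.univ.filter (fun j => j = i ∨ D i j), p j / q j) ^ 2
      ≤ M := by
  have hratio : ∀ j, 0 ≤ p j / q j := fun j => div_nonneg (hpnn j) (hqpos j).le
  have hmean : ∑ i, p i * ∑ j with j = i ∨ D i j, p j / q j = 1 := by
    rw [← hpsum]
    exact sum_mul_sum_filter_div_eq_sum (fun i j => j = i ∨ D i j) p q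
      (fun j => (hq j).trans (sum_filter_eq_or_eq_add D hirr p j).symm) fun j => (hqpos j).ne'
  calc _ ≤ (∑ j, p j / q j) * ∑ i, p i * ∑ j with j = i ∨ D i j, p j / q j :=
        sum_mul_sq_le_mul_sum_mul _ _ _ _ (fun i _ => hpnn i)
          (fun i _ => sum_nonneg fun j _ => hratio j)
          (fun i _ => sum_le_sum_of_subset_of_nonneg (subset_univ _) fun j _ _ => hratio j)
    _ ≤ M := by rwa [hmean, mul_one]

/-- For a probability distribution `p` with `q_i := ∑_{j→i} p_j > 0` for all `i`
and `∑_i p_i/q_i ≤ M`, one has `∑_i p_i (∑_{j : i→j} p_j/q_j)² ≤ M`. -/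
theorem stmt14 (K : ℕ) (D : Fin K → Fin K → Prop) [DecidableRel D]
    (hirr : ∀ i, ¬ D i i)
    (M : ℝ) (hM : 0 < M)
    (p : Fin K → ℝ) (hpnn : ∀ i, 0 ≤ p i) (hpsum : ∑ i, p i = 1)
    (q : Fin K → ℝ)
    (hq : ∀ i, q i = p i + ∑ j ∈ Finset.univ.filter (fun j => D j i), p j)
    (hqpos : ∀ i, 0 < q i)
    (h1 : ∑ i : Fin K, p i / q i ≤ M) :
    ∑ i : Fin K, p i *
        (∑ j ∈ Finset.univ.filter (fun j => j = i ∨ D i j), p j / q j) ^ 2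
      ≤ M :=
  stmt14_general K D hirr M p hpnn hpsum q hq hqpos h1
end

section
/- Let G be a directed graph on V = {1,...,K} (with self-loops implicit), and p, s probability distributions with q_i := Σ_{j→i} p_j, Σ_i p_i/q_i ≤ M, max_i 1/(Σ_{j→i} s_j) ≤ M, p_i ≥ γ s_i for all i, γ > 0. Then Σ_{i=1}^K p_i (Σ_{j : i→j} p_j/q_j²)² ≤ M³/γ. -/
/-!
Write `A i = ∑_{i → j} p j / q j ^ 2`. From `p ≥ γ s` and `M ∑_{k → j} s k ≥ 1` we get
`q j ≥ γ ∑_{k → j} s k ≥ γ / M`, so `∑_j p j / q j ^ 2 ≤ (M / γ) ∑_j p j / q j ≤ M² / γ`, which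
bounds every `A i`. Exchanging the order of summation, `∑_i p i A i ≤ ∑_j (p j / q j ^ 2) q j ≤ M`.
Hence `∑_i p i (A i)² ≤ (max_i A i) ∑_i p i A i ≤ M³ / γ`.
-/

open Finset

theorem sum_mul_sq_le_mul_sum_mul_s16 {ι : Type*} (s : Finset ι) (w a : ι → ℝ) (B : ℝ)
    (hw : ∀ i ∈ s, 0 ≤ w i) (ha : ∀ i ∈ s, 0 ≤ a i) (haB : ∀ i ∈ s, a i ≤ B) :
    ∑ i ∈ s, w i * a i ^ 2 ≤ B * ∑ i ∈ s, w i * a i := by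
  rw [mul_sum]
  refine sum_le_sum fun i hi => ?_
  calc w i * a i ^ 2 = (w i * a i) * a i := by ring
    _ ≤ (w i * a i) * B := by gcongr; exacts [mul_nonneg (hw i hi) (ha i hi), haB i hi]
    _ = B * (w i * a i) := mul_comm _ _

theorem inv_le_div_of_le_mul {q M γ : ℝ} (hγ : 0 < γ) (hM : 0 ≤ M) (h : γ ≤ M * q) :
    q⁻¹ ≤ M / γ := by
  have hq : 0 < q := pos_of_mul_pos_right (hγ.trans_le h) hM
  rw [inv_le_iff_one_le_mul₀ hq, div_mul_eq_mul_div, le_div_iff₀ hγ]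
  linarith

theorem div_sq_mul_self (p q : ℝ) : p / q ^ 2 * q = p / q := by
  rcases eq_or_ne q 0 with rfl | hq
  · simp
  · field_simp

theorem sum_div_sq_le_mul_sum_div {ι : Type*} (s : Finset ι) (p q : ι → ℝ) (c : ℝ)
    (hp : ∀ i ∈ s, 0 ≤ p i) (hq : ∀ i ∈ s, 0 ≤ q i) (hc : ∀ i ∈ s, (q i)⁻¹ ≤ c) :
    ∑ i ∈ s, p i / q i ^ 2 ≤ c * ∑ i ∈ s, p i / q i := by
  rw [mul_sum]
  refine sum_le_sum fun i hi => ?_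
  calc p i / q i ^ 2 = p i / q i * (q i)⁻¹ := by ring
    _ ≤ p i / q i * c := by gcongr; exacts [div_nonneg (hp i hi) (hq i hi), hc i hi]
    _ = c * (p i / q i) := mul_comm _ _

section

variable {ι : Type*} [Fintype ι]

theorem sum_mul_sum_filter_comm_s16 (r : ι → ι → Prop) [DecidableRel r] (a b : ι → ℝ) :
    ∑ i, a i * ∑ j with r i j, b j = ∑ j, b j * ∑ i with r i j, a i := by
  simp_rw [mul_sum, sum_filter]
  rw [sum_comm]
  refine sum_congr rfl fun j _ => sum_congr rfl fun i _ => ?_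
  split_ifs <;> ring

variable [DecidableEq ι] (D : ι → ι → Prop) [DecidableRel D]

theorem sum_filter_eq_or_le {p : ι → ℝ} (hp : ∀ i, 0 ≤ p i) (j : ι) :
    ∑ i with j = i ∨ D i j, p i ≤ p j + ∑ i with D i j, p i := by
  rw [filter_or, filter_eq, if_pos (mem_univ j), ← sum_singleton p j]
  linarith [sum_union_inter (s₁ := {j}) (s₂ := univ.filter (D · j)) (f := p),
    sum_nonneg fun i (_ : i ∈ {j} ∩ univ.filter (D · j)) => hp i]

theorem sum_mul_sum_filter_eq_or_le {p q f : ι → ℝ} (hp : ∀ i, 0 ≤ p i) (hf : ∀ j, 0 ≤ f j)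
    (hq : ∀ j, p j + ∑ i with D i j, p i ≤ q j) :
    ∑ i, p i * ∑ j with j = i ∨ D i j, f j ≤ ∑ j, f j * q j := by
  rw [sum_mul_sum_filter_comm_s16 (fun i j => j = i ∨ D i j)]
  gcongr with j
  · exact hf j
  · exact (sum_filter_eq_or_le D hp j).trans (hq j)

end

theorem stmt16_general (K : ℕ) (D : Fin K → Fin K → Prop) [DecidableRel D]
    (M γ : ℝ) (hγ : 0 < γ)
    (p s : Fin K → ℝ)
    (hpnn : ∀ i, 0 ≤ p i)
    (q : Fin K → ℝ)
    (hq : ∀ i, q i = p i + ∑ j ∈ Finset.univ.filter (fun j => D j i), p j)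
    (h1 : ∑ i : Fin K, p i / q i ≤ M)
    (h2 : ∀ i : Fin K,
      1 ≤ M * (s i + ∑ j ∈ Finset.univ.filter (fun j => D j i), s j))
    (h3 : ∀ i, γ * s i ≤ p i) :
    ∑ i : Fin K, p i *
        (∑ j ∈ Finset.univ.filter (fun j => j = i ∨ D i j), p j / (q j) ^ 2) ^ 2
      ≤ M ^ 3 / γ := by
  have hq_nonneg (j : Fin K) : 0 ≤ q j :=
    hq j ▸ add_nonneg (hpnn j) (sum_nonneg fun i _ => hpnn i)
  have hM : 0 ≤ M := (sum_nonneg fun i _ => div_nonneg (hpnn i) (hq_nonneg i)).trans h1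
  have hq_inv (j : Fin K) : (q j)⁻¹ ≤ M / γ := by
    have hs : γ * (s j + ∑ i with D i j, s i) ≤ q j := by
      rw [hq, mul_add, mul_sum]
      exact add_le_add (h3 j) (sum_le_sum fun i _ => h3 i)
    exact inv_le_div_of_le_mul hγ hM (by nlinarith [h2 j])
  have hf (j : Fin K) : 0 ≤ p j / q j ^ 2 := div_nonneg (hpnn j) (sq_nonneg _)
  have htotal : ∑ j, p j / q j ^ 2 ≤ M ^ 2 / γ :=
    calc ∑ j, p j / q j ^ 2 ≤ M / γ * ∑ j, p j / q j :=
          sum_div_sq_le_mul_sum_div _ p q _ (fun j _ => hpnn j) (fun j _ => hq_nonneg j)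
            fun j _ => hq_inv j
      _ ≤ M / γ * M := by gcongr
      _ = M ^ 2 / γ := by ring
  have hmean : ∑ i, p i * ∑ j with j = i ∨ D i j, p j / q j ^ 2 ≤ M :=
    calc _ ≤ ∑ j, p j / q j ^ 2 * q j := sum_mul_sum_filter_eq_or_le D hpnn hf fun j => (hq j).ge
      _ = ∑ j, p j / q j := by simp only [div_sq_mul_self]
      _ ≤ M := h1
  calc _ ≤ M ^ 2 / γ * ∑ i, p i * ∑ j with j = i ∨ D i j, p j / q j ^ 2 :=
        sum_mul_sq_le_mul_sum_mul_s16 _ _ _ _ (fun i _ => hpnn i)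
          (fun i _ => sum_nonneg fun j _ => hf j)
          fun i _ => (sum_le_sum_of_subset_of_nonneg (filter_subset _ _) fun j _ _ => hf j).trans
            htotal
    _ ≤ M ^ 2 / γ * M := by gcongr
    _ = M ^ 3 / γ := by ring

/-- If `∑_i p_i/q_i ≤ M`, `max_i 1/∑_{j→i} s_j ≤ M` and `p_i ≥ γ s_i` for all `i`
(with `q_i := ∑_{j→i} p_j` and `j → i` meaning `j = i` or `(j,i) ∈ D`), then
`∑_i p_i (∑_{j : i→j} p_j/q_j²)² ≤ M³/γ`. -/
theorem stmt16 (K : ℕ) (D : Fin K → Fin K → Prop) [DecidableRel D]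
    (hirr : ∀ i, ¬ D i i)
    (M γ : ℝ) (hM : 0 < M) (hγ : 0 < γ)
    (p s : Fin K → ℝ)
    (hpnn : ∀ i, 0 ≤ p i) (hpsum : ∑ i, p i = 1)
    (hsnn : ∀ i, 0 ≤ s i) (hssum : ∑ i, s i = 1)
    (q : Fin K → ℝ)
    (hq : ∀ i, q i = p i + ∑ j ∈ Finset.univ.filter (fun j => D j i), p j)
    (h1 : ∑ i : Fin K, p i / q i ≤ M)
    (h2 : ∀ i : Fin K,
      1 ≤ M * (s i + ∑ j ∈ Finset.univ.filter (fun j => D j i), s j))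
    (h3 : ∀ i, γ * s i ≤ p i) :
    ∑ i : Fin K, p i *
        (∑ j ∈ Finset.univ.filter (fun j => j = i ∨ D i j), p j / (q j) ^ 2) ^ 2
      ≤ M ^ 3 / γ :=
  stmt16_general K D M γ hγ p s hpnn q hq h1 h2 h3
end
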